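/- arXiv:math/0106084 — 3 statements merged into one kernel-verified Lean document; each statement's English description precedes it below -/
import Mathlib

section
/- Let t < 0 and let 0 < ε < −t. Then the link of the Cartan umbrella at the point (0,0,t), namely its intersection with the sphere of radius ε centered at (0,0,t), consists of exactly two points: {(x,y,z) ∈ ℝ³ | x² = z·y² ∧ x² + y² + (z−t)² = ε²} = {(0, 0, t−ε), (0, 0, t+ε)}. -/
/-- For `t < 0` and `0 < ε < -t`, the link of the Cartan umbrella at `(0,0,t)`
consists of exactly the two points `(0,0,t-ε)` and `(0,0,t+ε)`. -/
theorem stmt_4 (t ε : ℝ) (ht : t < 0) (hε : 0 < ε) (hεt : ε < -t) :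
    {p : ℝ × ℝ × ℝ | p.1 ^ 2 = p.2.2 * p.2.1 ^ 2 ∧
        p.1 ^ 2 + p.2.1 ^ 2 + (p.2.2 - t) ^ 2 = ε ^ 2} =
      {((0 : ℝ), (0 : ℝ), t - ε), ((0 : ℝ), (0 : ℝ), t + ε)} := by
  ext ⟨x, y, z⟩
  simp only [Set.mem_setOf_eq, Set.mem_insert_iff, Set.mem_singleton_iff, Prod.mk.injEq]
  constructor
  · rintro ⟨h1, h2⟩
    have hzt : (z - t) ^ 2 ≤ ε ^ 2 := by nlinarith [sq_nonneg x, sq_nonneg y]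
    have hz : z < 0 := by nlinarith
    have hx : x = 0 := by
      nlinarith [sq_nonneg x, sq_nonneg y, mul_nonpos_of_nonpos_of_nonneg hz.le (sq_nonneg y)]
    have hy : y = 0 := by
      have h : y ^ 2 = 0 := by nlinarith [sq_nonneg y]
      exact pow_eq_zero_iff (by norm_num) |>.mp h
    subst hx hy
    have heq : (z - (t - ε)) * (z - (t + ε)) = 0 := by nlinarith
    rcases mul_eq_zero.mp heq with h | h
    · left; exact ⟨rfl, rfl, by linarith⟩
    · right; exact ⟨rfl, rfl, by linarith⟩
  · rintro (⟨hx, hy, hz⟩ | ⟨hx, hy, hz⟩) <;> subst hx hy hz <;> constructor <;> ring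
end

section
/- For every ε > 0, the link of the Whitney umbrella at the origin, namely the set {(x,y,z) ∈ ℝ³ | x² = z·y² ∧ z ≥ 0 ∧ x² + y² + z² = ε²} with its subspace topology, is homeomorphic to the figure eight, realized as the subspace F = {(a,b) ∈ ℝ² | (a−1)² + b² = 1 ∨ (a+1)² + b² = 1} of ℝ² (the union of two unit circles tangent at the origin). -/
/-!
The umbrella is the image of `(u, v) ↦ (u v, u, v²)`, which is injective except that it folds the
`v`-axis in two; so the link is a circle with two of its points glued together, a figure eight.
Concretely, with `c = 2 (1 + z) / (ε² + z)`, the map `(x, y, z) ↦ (c y |y|, c x)` sends the link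
continuously and bijectively onto the figure eight `a² + b² = 2 |a|`, and the link is compact.
The identity `c (y² + z) = 2` on the link does all the work: it gives `|a| = c y² = 2 - c z`, and
`c z` is strictly increasing in `z ≥ 0`, so `(a, b)` determines `z`, then `y` and `x`.
-/

open Set

lemma IsCompact.nonempty_homeomorph_of_bijOn {X Y : Type*} [TopologicalSpace X]
    [TopologicalSpace Y] [T2Space Y] {f : X → Y} {s : Set X} {t : Set Y} (hs : IsCompact s)
    (hf : ContinuousOn f s) (hbij : BijOn f s t) : Nonempty (s ≃ₜ t) :=
  have : CompactSpace s := isCompact_iff_compactSpace.mp hs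
  ⟨(hf.mapsToRestrict hbij.mapsTo).homeoOfEquivCompactToT2 (f := Equiv.ofBijective _
    ⟨hbij.mapsTo.restrict_inj.mpr hbij.injOn,
      hbij.mapsTo.restrict_surjective_iff.mpr hbij.surjOn⟩)⟩

lemma strictMono_mul_abs_self : StrictMono fun y : ℝ => y * |y| := by
  intro y y' h
  simp only
  rcases le_total 0 y with hy | hy <;> rcases le_total 0 y' with hy' | hy'
  all_goals simp only [abs_of_nonneg, abs_of_nonpos, *]
  all_goals nlinarith [mul_pos (sub_pos.mpr h) (sub_pos.mpr h)]

lemma exists_mul_abs_self_eq (t : ℝ) : ∃ y : ℝ, y * |y| = t := by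
  rcases le_total 0 t with ht | ht
  · exact ⟨√t, by rw [abs_of_nonneg (Real.sqrt_nonneg t), Real.mul_self_sqrt ht]⟩
  · refine ⟨-√(-t), ?_⟩
    rw [abs_neg, abs_of_nonneg (Real.sqrt_nonneg _), neg_mul, Real.mul_self_sqrt (by linarith),
      neg_neg]

lemma exists_nonneg_sq_add_mul_eq (b : ℝ) {c : ℝ} (hc : 0 ≤ c) :
    ∃ z, 0 ≤ z ∧ z ^ 2 + b * z = c := by
  have hs : b ≤ √(b ^ 2 + 4 * c) := Real.le_sqrt_of_sq_le (by linarith)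
  refine ⟨(√(b ^ 2 + 4 * c) - b) / 2, by linarith, ?_⟩
  have := Real.sq_sqrt (by positivity : 0 ≤ b ^ 2 + 4 * c)
  linear_combination this / 4

def whitneyUmbrellaLink (ε : ℝ) : Set (ℝ × ℝ × ℝ) :=
  {p | p.1 ^ 2 = p.2.2 * p.2.1 ^ 2 ∧ 0 ≤ p.2.2 ∧ p.1 ^ 2 + p.2.1 ^ 2 + p.2.2 ^ 2 = ε ^ 2}

def figureEight : Set (ℝ × ℝ) :=
  {q | (q.1 - 1) ^ 2 + q.2 ^ 2 = 1 ∨ (q.1 + 1) ^ 2 + q.2 ^ 2 = 1}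

lemma mem_figureEight_iff {q : ℝ × ℝ} :
    q ∈ figureEight ↔ q.1 ^ 2 + q.2 ^ 2 = 2 * |q.1| := by
  obtain ⟨a, b⟩ := q
  simp only [figureEight, mem_ofPred_eq]
  constructor
  · rintro (h | h)
    · rw [abs_of_nonneg (by nlinarith [sq_nonneg b] : 0 ≤ a)]; linarith
    · rw [abs_of_nonpos (by nlinarith [sq_nonneg b] : a ≤ 0)]; linarith
  · intro h
    rcases le_total 0 a with ha | ha
    · left; rw [abs_of_nonneg ha] at h; linarith
    · right; rw [abs_of_nonpos ha] at h; linarith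

lemma abs_le_two_of_mem_figureEight {q : ℝ × ℝ} (hq : q ∈ figureEight) : |q.1| ≤ 2 := by
  have := mem_figureEight_iff.mp hq
  nlinarith [sq_abs q.1, sq_nonneg q.2]

lemma isCompact_whitneyUmbrellaLink (ε : ℝ) : IsCompact (whitneyUmbrellaLink ε) := by
  have hclosed : IsClosed (whitneyUmbrellaLink ε) := by
    simp only [whitneyUmbrellaLink, ofPred_and]
    exact (isClosed_eq (by fun_prop) (by fun_prop)).inter
      ((isClosed_le (by fun_prop) (by fun_prop)).inter (isClosed_eq (by fun_prop) (by fun_prop)))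
  refine (isCompact_closedBall (0 : ℝ × ℝ × ℝ) |ε|).of_isClosed_subset hclosed ?_
  rintro ⟨x, y, z⟩ ⟨-, -, hs⟩
  have bound : ∀ t : ℝ, t ^ 2 ≤ ε ^ 2 → ‖t‖ ≤ |ε| := fun t ht => sq_le_sq.mp ht
  simp only [mem_closedBall_zero_iff, Prod.norm_def, max_le_iff]
  exact ⟨bound x (by nlinarith), bound y (by nlinarith), bound z (by nlinarith)⟩

noncomputable def linkScale (ε z : ℝ) : ℝ := 2 * (1 + z) / (ε ^ 2 + z)

noncomputable def linkToFigureEight (ε : ℝ) (p : ℝ × ℝ × ℝ) : ℝ × ℝ :=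
  (linkScale ε p.2.2 * (p.2.1 * |p.2.1|), linkScale ε p.2.2 * p.1)

lemma linkScale_pos {ε : ℝ} (hε : ε ≠ 0) {z : ℝ} (hz : 0 ≤ z) : 0 < linkScale ε z := by
  unfold linkScale; positivity

lemma strictMonoOn_linkScale_mul_self {ε : ℝ} (hε : ε ≠ 0) :
    StrictMonoOn (fun z => linkScale ε z * z) (Ici 0) := by
  intro z (hz : 0 ≤ z) z' (hz' : 0 ≤ z') h
  have hε2 : 0 < ε ^ 2 := by positivity
  simp only [linkScale, div_mul_eq_mul_div]
  rw [div_lt_div_iff₀ (by positivity) (by positivity)]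
  nlinarith [mul_pos (sub_pos.mpr h) (by positivity : 0 < ε ^ 2 + ε ^ 2 * (z + z') + z * z')]

lemma linkScale_mul_sq_add_eq_two {ε : ℝ} (hε : ε ≠ 0) {p : ℝ × ℝ × ℝ}
    (hp : p ∈ whitneyUmbrellaLink ε) : linkScale ε p.2.2 * (p.2.1 ^ 2 + p.2.2) = 2 := by
  obtain ⟨hxz, hz, hs⟩ := hp
  rw [linkScale, div_mul_eq_mul_div, div_eq_iff (by positivity)]
  linear_combination 2 * hs - 2 * hxz

lemma abs_linkToFigureEight_fst {ε : ℝ} (hε : ε ≠ 0) {p : ℝ × ℝ × ℝ}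
    (hp : p ∈ whitneyUmbrellaLink ε) :
    |(linkToFigureEight ε p).1| = linkScale ε p.2.2 * p.2.1 ^ 2 := by
  rw [linkToFigureEight, abs_mul, abs_of_pos (linkScale_pos hε hp.2.1), abs_mul, abs_abs, ← sq,
    sq_abs]

lemma mapsTo_linkToFigureEight {ε : ℝ} (hε : ε ≠ 0) :
    MapsTo (linkToFigureEight ε) (whitneyUmbrellaLink ε) figureEight := by
  intro p hp
  rw [mem_figureEight_iff, abs_linkToFigureEight_fst hε hp]
  have hc := linkScale_mul_sq_add_eq_two hε hp
  simp only [linkToFigureEight, mul_pow, sq_abs]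
  linear_combination (linkScale ε p.2.2 * p.2.1 ^ 2) * hc + linkScale ε p.2.2 ^ 2 * hp.1

lemma injOn_linkToFigureEight {ε : ℝ} (hε : ε ≠ 0) :
    InjOn (linkToFigureEight ε) (whitneyUmbrellaLink ε) := by
  rintro ⟨x, y, z⟩ hp ⟨x', y', z'⟩ hp' h
  have hzz : z = z' := by
    refine strictMonoOn_linkScale_mul_self hε |>.injOn hp.2.1 hp'.2.1 ?_
    have key := linkScale_mul_sq_add_eq_two hε hp
    have key' := linkScale_mul_sq_add_eq_two hε hp'
    have habs := congrArg (fun q => |q.1|) h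
    simp only [abs_linkToFigureEight_fst hε hp, abs_linkToFigureEight_fst hε hp'] at habs
    linear_combination key - key' - habs
  subst hzz
  have hc := (linkScale_pos hε hp.2.1).ne'
  simp only [linkToFigureEight, Prod.mk.injEq, mul_right_inj' hc] at h
  rw [strictMono_mul_abs_self.injective h.1, h.2]

lemma surjOn_linkToFigureEight {ε : ℝ} (hε : ε ≠ 0) :
    SurjOn (linkToFigureEight ε) (whitneyUmbrellaLink ε) figureEight := by
  rintro ⟨a, b⟩ hq
  have hab := mem_figureEight_iff.mp hq
  have ha2 := abs_le_two_of_mem_figureEight hq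
  simp only at hab ha2
  obtain ⟨z, hz, hzq⟩ := exists_nonneg_sq_add_mul_eq (|a| / 2)
    (by positivity : 0 ≤ (2 - |a|) * ε ^ 2 / 2)
  set c := linkScale ε z with hc_def
  have hc : 0 < c := linkScale_pos hε hz
  have hcz : c * z = 2 - |a| := by
    rw [hc_def, linkScale, div_mul_eq_mul_div, div_eq_iff (by positivity)]
    linear_combination 2 * hzq
  obtain ⟨y, hy⟩ := exists_mul_abs_self_eq (a / c)
  have hy2 : c * y ^ 2 = |a| := by
    have := congrArg abs hy
    rw [abs_mul, abs_abs, ← sq, sq_abs, abs_div, abs_of_pos hc] at this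
    rw [this, mul_div_cancel₀ _ hc.ne']
  have hx : (b / c) ^ 2 = z * y ^ 2 := by
    rw [div_pow, div_eq_iff (by positivity)]
    linear_combination hab - c * y ^ 2 * hcz - (2 - |a|) * hy2 + sq_abs a
  have hcdef : c * (ε ^ 2 + z) = 2 * (1 + z) := by
    rw [hc_def, linkScale, div_mul_cancel₀ _ (by positivity)]
  refine ⟨(b / c, y, z), ⟨hx, hz, ?_⟩, ?_⟩
  · linear_combination hx - y ^ 2 / 2 * hcdef + (ε ^ 2 + z) / 2 * hy2 + hzq
  · simp only [linkToFigureEight, ← hc_def, hy, mul_div_cancel₀ _ hc.ne']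

lemma continuousOn_linkToFigureEight {ε : ℝ} (hε : ε ≠ 0) :
    ContinuousOn (linkToFigureEight ε) (whitneyUmbrellaLink ε) := by
  have hden : ∀ p ∈ whitneyUmbrellaLink ε, ε ^ 2 + p.2.2 ≠ 0 := fun p hp => by
    have := hp.2.1; positivity
  unfold linkToFigureEight linkScale
  fun_prop (disch := exact hden)

/-- For every `ε > 0`, the link of the Whitney umbrella at the origin is
homeomorphic to the figure eight (two unit circles in `ℝ²` tangent at the
origin). -/
theorem stmt_5 (ε : ℝ) (hε : 0 < ε) :
    Nonempty
      (({p : ℝ × ℝ × ℝ | p.1 ^ 2 = p.2.2 * p.2.1 ^ 2 ∧ 0 ≤ p.2.2 ∧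
          p.1 ^ 2 + p.2.1 ^ 2 + p.2.2 ^ 2 = ε ^ 2} : Set (ℝ × ℝ × ℝ)) ≃ₜ
        ({q : ℝ × ℝ | (q.1 - 1) ^ 2 + q.2 ^ 2 = 1 ∨
          (q.1 + 1) ^ 2 + q.2 ^ 2 = 1} : Set (ℝ × ℝ))) := by
  show Nonempty (whitneyUmbrellaLink ε ≃ₜ figureEight)
  exact (isCompact_whitneyUmbrellaLink ε).nonempty_homeomorph_of_bijOn
    (continuousOn_linkToFigureEight hε.ne')
    ⟨mapsTo_linkToFigureEight hε.ne', injOn_linkToFigureEight hε.ne',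
      surjOn_linkToFigureEight hε.ne'⟩
end

section
/- Let t > 0 and let 0 < ε < t. Then the link of the Cartan umbrella at the point (0,0,t), namely the set {(x,y,z) ∈ ℝ³ | x² = z·y² ∧ x² + y² + (z−t)² = ε²} with its subspace topology, is homeomorphic to the subspace G = {(a,b) ∈ ℝ² | a² + b² = 1 ∨ a²/4 + b² = 1} of ℝ² (the union of the unit circle and an ellipse meeting exactly at the two points (0,1) and (0,−1); topologically, a graph with two vertices and four edges joining one vertex to the other). -/
/-!
On the link `z > 0` (as `ε < t`), so `x² = z y²` splits it into the two sheets `x = √z y` and `x = -√z y`,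
which meet only where `y = 0`. On either sheet `(z + 1) y² + (z - t)² = ε²`, so
`(√(z + 1) y / ε, (z - t) / ε)` runs once around the unit circle; doubling the first coordinate
on the sheet `x = -√z y` sends it onto the ellipse instead, and the two common points to
`(0, ±1)`. Both recipes are one continuous formula in `(x, y, z)` (use `x / √z = ±y`), which is a
bijection from the compact link onto the union of the two curves, hence a homeomorphism.
-/

open Set Real

noncomputable def Set.BijOn.homeomorphOfCompactToT2 {X Y : Type*} [TopologicalSpace X]
    [TopologicalSpace Y] [T2Space Y] {f : X → Y} {s : Set X} {t : Set Y} (hf : BijOn f s t)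
    (hs : IsCompact s) (hfc : ContinuousOn f s) : s ≃ₜ t :=
  haveI := isCompact_iff_compactSpace.mp hs
  (hfc.mapsToRestrict hf.mapsTo).homeoOfEquivCompactToT2 (f := hf.equiv f)

namespace CartanUmbrella

def link (t ε : ℝ) : Set (ℝ × ℝ × ℝ) :=
  {p | p.1 ^ 2 = p.2.2 * p.2.1 ^ 2 ∧ p.1 ^ 2 + p.2.1 ^ 2 + (p.2.2 - t) ^ 2 = ε ^ 2}

def circleUnionEllipse : Set (ℝ × ℝ) :=
  {q | q.1 ^ 2 + q.2 ^ 2 = 1 ∨ q.1 ^ 2 / 4 + q.2 ^ 2 = 1}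

noncomputable def chart (t ε : ℝ) (p : ℝ × ℝ × ℝ) : ℝ × ℝ :=
  (√(p.2.2 + 1) * (3 * p.2.1 - p.1 / √p.2.2) / (2 * ε), (p.2.2 - t) / ε)

variable {t ε : ℝ}

lemma isCompact_link (t ε : ℝ) : IsCompact (link t ε) := by
  refine Metric.isCompact_of_isClosed_isBounded ?_ ?_
  · exact (isClosed_eq (by fun_prop) (by fun_prop)).inter (isClosed_eq (by fun_prop) (by fun_prop))
  · refine (Metric.isBounded_closedBall (x := ((0 : ℝ), (0 : ℝ), t)) (r := |ε|)).subset ?_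
    rintro ⟨x, y, z⟩ ⟨-, h⟩
    simp only [Metric.mem_closedBall, Prod.dist_eq, Real.dist_eq, sub_zero, max_le_iff,
      ← sq_le_sq]
    refine ⟨?_, ?_, ?_⟩ <;> nlinarith [sq_nonneg x, sq_nonneg y, sq_nonneg (z - t)]

lemma pos_of_mem_link (hε : 0 < ε) (hεt : ε < t) {p : ℝ × ℝ × ℝ} (hp : p ∈ link t ε) :
    0 < p.2.2 := by
  nlinarith [hp.2, sq_nonneg p.1, sq_nonneg p.2.1, sq_nonneg (p.2.2 - t + ε)]

lemma mem_link_iff {x y z : ℝ} (hz : 0 ≤ z) :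
    (x, y, z) ∈ link t ε ↔
      (x = √z * y ∨ x = -(√z * y)) ∧ (z + 1) * y ^ 2 + (z - t) ^ 2 = ε ^ 2 := by
  rw [← sq_eq_sq_iff_eq_or_eq_neg, mul_pow, sq_sqrt hz]
  exact and_congr_right fun h => by rw [h, add_one_mul]

lemma chart_sqrt_mul {y z : ℝ} (hz : 0 < z) :
    chart t ε (√z * y, y, z) = (√(z + 1) / ε * y, (z - t) / ε) := by
  rw [chart, mul_div_cancel_left₀ y (sqrt_pos.2 hz).ne']
  ring_nf

lemma chart_neg_sqrt_mul {y z : ℝ} (hz : 0 < z) :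
    chart t ε (-(√z * y), y, z) = (√(z + 1) / ε * (2 * y), (z - t) / ε) := by
  rw [chart, neg_div, mul_div_cancel_left₀ y (sqrt_pos.2 hz).ne']
  ring_nf

variable (hε : 0 < ε) (hεt : ε < t)
include hε hεt

lemma chart_mapsTo : MapsTo (chart t ε) (link t ε) circleUnionEllipse := by
  rintro ⟨x, y, z⟩ hp
  have hz : 0 < z := pos_of_mem_link hε hεt hp
  have hc : √(z + 1) ^ 2 = z + 1 := sq_sqrt (by linarith)
  obtain ⟨rfl | rfl, h⟩ := (mem_link_iff hz.le).1 hp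
  · left
    rw [chart_sqrt_mul hz]
    field_simp
    linear_combination h + y ^ 2 * hc
  · right
    rw [chart_neg_sqrt_mul hz]
    field_simp
    linear_combination 4 * h + 4 * y ^ 2 * hc

lemma chart_injOn : InjOn (chart t ε) (link t ε) := by
  rintro ⟨x, y, z⟩ hp ⟨x', y', z'⟩ hp' heq
  obtain rfl : z = z' := by
    simpa only [chart, div_left_inj' hε.ne', sub_left_inj] using congrArg Prod.snd heq
  have hz : 0 < z := pos_of_mem_link hε hεt hp
  have hk : √(z + 1) / ε ≠ 0 := (div_pos (sqrt_pos.2 (by linarith)) hε).ne'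
  obtain ⟨hx, h⟩ := (mem_link_iff hz.le).1 hp
  obtain ⟨hx', h'⟩ := (mem_link_iff hz.le).1 hp'
  have hyy : y ^ 2 = y' ^ 2 :=
    mul_left_cancel₀ (a := z + 1) (by linarith) (by linear_combination h - h')
  rcases hx with rfl | rfl <;> rcases hx' with rfl | rfl <;>
    simp only [chart_sqrt_mul hz, chart_neg_sqrt_mul hz, Prod.mk.injEq, and_true] at heq <;>
    have hy := mul_left_cancel₀ hk heq
  · rw [hy]
  · subst hy
    obtain rfl : y' = 0 := by nlinarith
    simp
  · subst hy
    obtain rfl : y = 0 := by nlinarith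
    simp
  · rw [mul_left_cancel₀ two_ne_zero hy]

lemma chart_surjOn : SurjOn (chart t ε) (link t ε) circleUnionEllipse := by
  rintro ⟨a, b⟩ hq
  have hb : -1 ≤ b := by
    rcases hq with h | h <;> nlinarith [sq_nonneg a, sq_nonneg (b + 1)]
  set z := t + ε * b
  have hz : 0 < z := by nlinarith
  have hc : √(z + 1) ^ 2 = z + 1 := sq_sqrt (by linarith)
  have hc0 : √(z + 1) ≠ 0 := (sqrt_pos.2 (by linarith)).ne'
  have hzt : (z - t) / ε = b := by field_simp; ring
  rcases hq with h | h
  · refine ⟨(√z * (ε * a / √(z + 1)), ε * a / √(z + 1), z),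
      (mem_link_iff hz.le).2 ⟨Or.inl rfl, ?_⟩, ?_⟩
    · rw [div_pow, hc, mul_div_cancel₀ _ (by linarith), show z - t = ε * b by ring]
      linear_combination ε ^ 2 * h
    · rw [chart_sqrt_mul hz, hzt]
      field_simp
  · refine ⟨(-(√z * (ε * a / (2 * √(z + 1)))), ε * a / (2 * √(z + 1)), z),
      (mem_link_iff hz.le).2 ⟨Or.inr rfl, ?_⟩, ?_⟩
    · rw [div_pow, mul_pow (2 : ℝ), hc, show z - t = ε * b by ring]
      field_simp
      linear_combination 4 * h
    · rw [chart_neg_sqrt_mul hz, hzt]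
      field_simp

lemma chart_bijOn : BijOn (chart t ε) (link t ε) circleUnionEllipse :=
  ⟨chart_mapsTo hε hεt, chart_injOn hε hεt, chart_surjOn hε hεt⟩

lemma chart_continuousOn : ContinuousOn (chart t ε) (link t ε) := by
  have hz : ∀ p ∈ link t ε, √p.2.2 ≠ 0 := fun p hp ↦ (sqrt_pos.2 (pos_of_mem_link hε hεt hp)).ne'
  unfold chart
  fun_prop (disch := assumption)

end CartanUmbrella

theorem stmt_7_general (t ε : ℝ) (hε : 0 < ε) (hεt : ε < t) :
    Nonempty
      (({p : ℝ × ℝ × ℝ | p.1 ^ 2 = p.2.2 * p.2.1 ^ 2 ∧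
          p.1 ^ 2 + p.2.1 ^ 2 + (p.2.2 - t) ^ 2 = ε ^ 2} : Set (ℝ × ℝ × ℝ)) ≃ₜ
        ({q : ℝ × ℝ | q.1 ^ 2 + q.2 ^ 2 = 1 ∨
          q.1 ^ 2 / 4 + q.2 ^ 2 = 1} : Set (ℝ × ℝ))) :=
  ⟨(CartanUmbrella.chart_bijOn hε hεt).homeomorphOfCompactToT2
    (CartanUmbrella.isCompact_link t ε) (CartanUmbrella.chart_continuousOn hε hεt)⟩

/-- For `t > 0` and `0 < ε < t`, the link of the Cartan umbrella at `(0,0,t)`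
is homeomorphic to the union of the unit circle and the ellipse
`a²/4 + b² = 1` in `ℝ²` (a graph with two vertices and four edges). -/
theorem stmt_7 (t ε : ℝ) (ht : 0 < t) (hε : 0 < ε) (hεt : ε < t) :
    Nonempty
      (({p : ℝ × ℝ × ℝ | p.1 ^ 2 = p.2.2 * p.2.1 ^ 2 ∧
          p.1 ^ 2 + p.2.1 ^ 2 + (p.2.2 - t) ^ 2 = ε ^ 2} : Set (ℝ × ℝ × ℝ)) ≃ₜ
        ({q : ℝ × ℝ | q.1 ^ 2 + q.2 ^ 2 = 1 ∨
          q.1 ^ 2 / 4 + q.2 ^ 2 = 1} : Set (ℝ × ℝ))) :=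
  stmt_7_general t ε hε hεt
end
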